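/- arXiv:1609.07559 — 4 statements merged into one kernel-verified Lean document; each statement's English description precedes it below -/
import Mathlib

section
/- For any β ∈ ℝ, let γ = e^β and let a be determined by 2γβ² = -a(1+γ)². Then the function f₁(x) = βx - 2·log((e^{βx} + γ)/(1 + γ)) satisfies the differential equation f₁''(x) = a e^{f₁(x)} on ℝ, together with the boundary conditions f₁(0) = 0 and f₁'(1) = 0. -/
open Real

/-- The function `f₁(x) = βx - 2 log((e^{βx} + e^β)/(1 + e^β))` solves the Euler–Lagrange
equation `f₁'' = a e^{f₁}` with `a = -2 e^β β² / (1 + e^β)²` (i.e. `2γβ² = -a(1+γ)²`,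
`γ = e^β`), and satisfies the boundary conditions `f₁(0) = 0` and `f₁'(1) = 0`. -/
theorem stmt2 (β : ℝ)
    (f₁ : ℝ → ℝ)
    (hf₁ : ∀ x, f₁ x = β * x - 2 * Real.log ((Real.exp (β * x) + Real.exp β) / (1 + Real.exp β)))
    (a : ℝ) (ha : 2 * Real.exp β * β ^ 2 = -a * (1 + Real.exp β) ^ 2) :
    (∀ x, deriv (deriv f₁) x = a * Real.exp (f₁ x)) ∧ f₁ 0 = 0 ∧ deriv f₁ 1 = 0 := by
  set γ := Real.exp β with hγ
  have hγpos : 0 < γ := Real.exp_pos β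
  have hupos : ∀ x : ℝ, 0 < Real.exp (β * x) + γ := fun x =>
    add_pos (Real.exp_pos _) hγpos
  have h1γ : 0 < 1 + γ := by linarith
  -- derivative of f₁
  have hf' : ∀ x : ℝ, HasDerivAt f₁ (β - 2 * (β * Real.exp (β * x) / (Real.exp (β * x) + γ))) x := by
    intro x
    have he : HasDerivAt (fun x : ℝ => Real.exp (β * x)) (β * Real.exp (β * x)) x := by
      have := (Real.hasDerivAt_exp (β * x)).comp x ((hasDerivAt_id x).const_mul β)
      simpa [mul_comm, Function.comp_def] using this
    have hu : HasDerivAt (fun x : ℝ => Real.exp (β * x) + γ) (β * Real.exp (β * x)) x :=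
      he.add_const γ
    have hlog : HasDerivAt (fun x : ℝ => Real.log (Real.exp (β * x) + γ))
        (β * Real.exp (β * x) / (Real.exp (β * x) + γ)) x :=
      hu.log (hupos x).ne'
    have hmain : HasDerivAt (fun x : ℝ => β * x - 2 * (Real.log (Real.exp (β * x) + γ) - Real.log (1 + γ)))
        (β - 2 * (β * Real.exp (β * x) / (Real.exp (β * x) + γ))) x := by
      have h1 : HasDerivAt (fun x : ℝ => β * x) β x := by
        simpa using (hasDerivAt_id x).const_mul β
      exact h1.sub (((hlog.sub_const (Real.log (1 + γ)))).const_mul 2)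
    have heq : f₁ = fun x : ℝ => β * x - 2 * (Real.log (Real.exp (β * x) + γ) - Real.log (1 + γ)) := by
      funext y
      rw [hf₁ y, Real.log_div (hupos y).ne' h1γ.ne']
    rw [heq]
    exact hmain
  have hderiv : deriv f₁ = fun x => β - 2 * (β * Real.exp (β * x) / (Real.exp (β * x) + γ)) := by
    funext x; exact (hf' x).deriv
  refine ⟨?_, ?_, ?_⟩
  · intro x
    -- second derivative
    have he : HasDerivAt (fun x : ℝ => Real.exp (β * x)) (β * Real.exp (β * x)) x := by
      have := (Real.hasDerivAt_exp (β * x)).comp x ((hasDerivAt_id x).const_mul β)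
      simpa [mul_comm, Function.comp_def] using this
    have hu : HasDerivAt (fun x : ℝ => Real.exp (β * x) + γ) (β * Real.exp (β * x)) x :=
      he.add_const γ
    have hq : HasDerivAt (fun x : ℝ => Real.exp (β * x) / (Real.exp (β * x) + γ))
        ((β * Real.exp (β * x) * (Real.exp (β * x) + γ) - Real.exp (β * x) * (β * Real.exp (β * x)))
          / (Real.exp (β * x) + γ) ^ 2) x :=
      he.div hu (hupos x).ne'
    have hg : HasDerivAt (fun x => β - 2 * (β * (Real.exp (β * x) / (Real.exp (β * x) + γ))))
        (-(2 * (β * ((β * Real.exp (β * x) * (Real.exp (β * x) + γ) - Real.exp (β * x) * (β * Real.exp (β * x)))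
          / (Real.exp (β * x) + γ) ^ 2)))) x := by
      simpa using ((hq.const_mul β).const_mul 2).const_sub β
    have hg' : deriv (deriv f₁) x
        = -(2 * (β * ((β * Real.exp (β * x) * (Real.exp (β * x) + γ) - Real.exp (β * x) * (β * Real.exp (β * x)))
          / (Real.exp (β * x) + γ) ^ 2))) := by
      rw [hderiv]
      have : (fun x => β - 2 * (β * Real.exp (β * x) / (Real.exp (β * x) + γ)))
          = (fun x => β - 2 * (β * (Real.exp (β * x) / (Real.exp (β * x) + γ)))) := by
        funext y; ring
      rw [this]
      exact hg.deriv
    rw [hg']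
    -- compute exp (f₁ x)
    have hexp : Real.exp (f₁ x) = Real.exp (β * x) * (1 + γ) ^ 2 / (Real.exp (β * x) + γ) ^ 2 := by
      rw [hf₁ x]
      have hqpos : 0 < (Real.exp (β * x) + γ) / (1 + γ) := div_pos (hupos x) h1γ
      have h2 : Real.exp (2 * Real.log ((Real.exp (β * x) + γ) / (1 + γ)))
          = ((Real.exp (β * x) + γ) / (1 + γ)) ^ 2 := by
        rw [two_mul, Real.exp_add, Real.exp_log hqpos]; ring
      rw [Real.exp_sub, h2, div_pow]
      field_simp
    rw [hexp]
    have hane : a * (1 + γ) ^ 2 = -(2 * γ * β ^ 2) := by linarith [ha]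
    field_simp
    linear_combination (-1) * hane
  · rw [hf₁ 0]
    simp only [mul_zero, Real.exp_zero]
    rw [add_comm, div_self (by linarith : γ + (1:ℝ) ≠ 0)]
    simp
  · rw [hderiv]
    simp only [mul_one]
    rw [← hγ]
    field_simp
    ring
end

section
/- For β > 0, the function f(x) = βx - 2·log((e^{βx} + e^β)/(1 + e^β)) satisfies ∫₀¹ e^{f(x)} dx = sinh(β)/β. -/
/-!
The integrand is `(1 + e^β)² e^{βx} / (e^{βx} + e^β)²`, whose antiderivative is
`-(1 + e^β)² / (β (e^{βx} + e^β))`; between `0` and `1` this gives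
`(1 + e^β)(e^β - 1) / (2β e^β) = sinh β / β`.
-/

open Real

section

variable {b c : ℝ}

lemma hasDerivAt_inv_exp_mul_add (hc : 0 ≤ c) (x : ℝ) :
    HasDerivAt (fun x => (exp (b * x) + c)⁻¹)
      (-(b * exp (b * x)) / (exp (b * x) + c) ^ 2) x := by
  have h : HasDerivAt (fun x => exp (b * x) + c) (exp (b * x) * b) x :=
    (((hasDerivAt_id x).const_mul b).exp.add_const c).congr_deriv (by simp)
  exact (h.inv (by positivity)).congr_deriv (by ring)

theorem integral_exp_mul_div_exp_mul_add_sq (hb : b ≠ 0) (hc : 0 ≤ c) (u v : ℝ) :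
    ∫ x in u..v, exp (b * x) / (exp (b * x) + c) ^ 2
      = ((exp (b * u) + c)⁻¹ - (exp (b * v) + c)⁻¹) / b := by
  have hderiv (x : ℝ) : HasDerivAt (fun x => -(exp (b * x) + c)⁻¹ / b)
      (exp (b * x) / (exp (b * x) + c) ^ 2) x :=
    ((hasDerivAt_inv_exp_mul_add hc x).neg.div_const b).congr_deriv (by field_simp)
  have hcont : Continuous fun x => exp (b * x) / (exp (b * x) + c) ^ 2 :=
    Continuous.div (by fun_prop) (by fun_prop) fun x => by positivity
  rw [intervalIntegral.integral_eq_sub_of_hasDerivAt (fun x _ => hderiv x)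
    (hcont.intervalIntegrable u v)]
  ring

end

/-- Constraint equation for the optimal path, case `K ≥ S₀`:
`∫₀¹ e^{f(x)} dx = sinh β / β` where
`f(x) = βx - 2 log((e^{βx} + e^β)/(1 + e^β))`. -/
theorem stmt4 (β : ℝ) (hβ : 0 < β)
    (f : ℝ → ℝ)
    (hf : ∀ x, f x = β * x - 2 * Real.log ((Real.exp (β * x) + Real.exp β) / (1 + Real.exp β))) :
    ∫ x in (0:ℝ)..1, Real.exp (f x) = Real.sinh β / β := by
  have hexp : ∀ x, exp (f x) = (1 + exp β) ^ 2 * (exp (β * x) / (exp (β * x) + exp β) ^ 2) := by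
    intro x
    rw [hf, exp_sub, two_mul, exp_add, exp_log (by positivity)]
    field_simp
  simp_rw [hexp, intervalIntegral.integral_const_mul,
    integral_exp_mul_div_exp_mul_add_sq hβ.ne' (exp_pos β).le, mul_zero, mul_one, exp_zero,
    sinh_eq, exp_neg]
  field_simp
  ring
end

section
/- For β > 0, with f(x) = βx - 2·log((e^{βx} + e^β)/(1 + e^β)), one has (1/2)∫₀¹ (f'(x))² dx = β²/2 - β·tanh(β/2). -/
/-!
Writing `e^{βx} + e^β = 2 e^{β(1+x)/2} cosh(β(1-x)/2)` turns the profile into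
`f x = 2 log cosh(β/2) - 2 log cosh(β(1-x)/2)`, so `f' x = β tanh(β(1-x)/2)`.
Since `tanh' = 1 - tanh²`, the function `β² x + 2β tanh(β(1-x)/2)` is an antiderivative
of `(f')²`, and its increment over `[0, 1]` is `β² - 2β tanh(β/2)`.
-/

open Real

namespace Real

theorem exp_add_exp (a b : ℝ) : exp a + exp b = 2 * exp ((a + b) / 2) * cosh ((a - b) / 2) := by
  calc exp a + exp b = exp ((a + b) / 2 + (a - b) / 2) + exp ((a + b) / 2 + -((a - b) / 2)) := by
        ring_nf
    _ = 2 * exp ((a + b) / 2) * cosh ((a - b) / 2) := by rw [exp_add, exp_add, cosh_eq]; ring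

theorem hasDerivAt_log_cosh (x : ℝ) : HasDerivAt (fun y => log (cosh y)) (tanh x) x := by
  rw [tanh_eq_sinh_div_cosh]
  exact (hasDerivAt_cosh x).log (cosh_pos x).ne'

theorem hasDerivAt_tanh (x : ℝ) : HasDerivAt tanh (1 - tanh x ^ 2) x := by
  have htanh : sinh / cosh = tanh := funext fun y => (tanh_eq_sinh_div_cosh y).symm
  have hquot := (hasDerivAt_sinh x).div (hasDerivAt_cosh x) (cosh_pos x).ne'
  rw [htanh] at hquot
  refine hquot.congr_deriv ?_
  rw [tanh_eq_sinh_div_cosh, div_pow, one_sub_div (pow_pos (cosh_pos x) 2).ne']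
  ring

theorem continuous_tanh : Continuous tanh :=
  continuous_iff_continuousAt.2 fun x => (hasDerivAt_tanh x).continuousAt

end Real

theorem mul_sub_two_mul_log_eq_log_cosh (β x : ℝ) :
    β * x - 2 * log ((exp (β * x) + exp β) / (1 + exp β))
      = 2 * log (cosh (β / 2)) - 2 * log (cosh (β * (1 - x) / 2)) := by
  have hnum : exp (β * x) + exp β = 2 * exp (β * (1 + x) / 2) * cosh (β * (1 - x) / 2) := by
    rw [add_comm, exp_add_exp]; ring_nf
  have hden : 1 + exp β = 2 * exp (β / 2) * cosh (β / 2) := by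
    rw [add_comm, ← exp_zero, exp_add_exp]; ring_nf
  rw [hnum, hden, log_div (by positivity) (by positivity), log_mul (by positivity) (by positivity),
    log_mul (by positivity) (by positivity), log_exp, log_mul (by positivity) (by positivity),
    log_mul (by positivity) (by positivity), log_exp]
  ring

theorem hasDerivAt_mul_one_sub_div_two (β x : ℝ) :
    HasDerivAt (fun y => β * (1 - y) / 2) (-β / 2) x :=
  ((((hasDerivAt_id' x).const_sub 1).const_mul β).div_const 2).congr_deriv (by ring)

theorem hasDerivAt_const_sub_two_mul_log_cosh (β c x : ℝ) :
    HasDerivAt (fun y => c - 2 * log (cosh (β * (1 - y) / 2))) (β * tanh (β * (1 - x) / 2)) x :=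
  ((((hasDerivAt_log_cosh _).comp x (hasDerivAt_mul_one_sub_div_two β x)).const_mul 2).const_sub
    c).congr_deriv (by ring)

theorem hasDerivAt_sq_mul_add_two_mul_tanh (β x : ℝ) :
    HasDerivAt (fun y => β ^ 2 * y + 2 * β * tanh (β * (1 - y) / 2))
      ((β * tanh (β * (1 - x) / 2)) ^ 2) x :=
  (((hasDerivAt_id' x).const_mul (β ^ 2)).add
    (((hasDerivAt_tanh _).comp x (hasDerivAt_mul_one_sub_div_two β x)).const_mul (2 * β))).congr_deriv
    (by ring)

theorem integral_sq_mul_tanh (β : ℝ) :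
    ∫ x in (0 : ℝ)..1, (β * tanh (β * (1 - x) / 2)) ^ 2 = β ^ 2 - 2 * β * tanh (β / 2) := by
  have hcont : Continuous fun x => (β * tanh (β * (1 - x) / 2)) ^ 2 :=
    (continuous_const.mul (continuous_tanh.comp (by fun_prop))).pow 2
  rw [intervalIntegral.integral_eq_sub_of_hasDerivAt
    (fun x _ => hasDerivAt_sq_mul_add_two_mul_tanh β x) (hcont.intervalIntegrable 0 1)]
  norm_num

theorem stmt6_general (β : ℝ)
    (f : ℝ → ℝ)
    (hf : ∀ x, f x = β * x - 2 * Real.log ((Real.exp (β * x) + Real.exp β) / (1 + Real.exp β))) :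
    (1/2) * ∫ x in (0:ℝ)..1, (deriv f x) ^ 2
      = β ^ 2 / 2 - β * Real.tanh (β / 2) := by
  have hf_cosh : f = fun x => 2 * log (cosh (β / 2)) - 2 * log (cosh (β * (1 - x) / 2)) :=
    funext fun x => (hf x).trans (mul_sub_two_mul_log_eq_log_cosh β x)
  have hderiv : deriv f = fun x => β * tanh (β * (1 - x) / 2) := by
    subst hf_cosh
    exact funext fun x => (hasDerivAt_const_sub_two_mul_log_cosh β _ x).deriv
  rw [hderiv, integral_sq_mul_tanh]
  ring

/-- Rate function value in the Black–Scholes model, case `K ≥ S₀`: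
`(1/2)∫₀¹ (f'(x))² dx = β²/2 - β tanh(β/2)` for
`f(x) = βx - 2 log((e^{βx} + e^β)/(1 + e^β))`, `β > 0`. -/
theorem stmt6 (β : ℝ) (hβ : 0 < β)
    (f : ℝ → ℝ)
    (hf : ∀ x, f x = β * x - 2 * Real.log ((Real.exp (β * x) + Real.exp β) / (1 + Real.exp β))) :
    (1/2) * ∫ x in (0:ℝ)..1, (deriv f x) ^ 2
      = β ^ 2 / 2 - β * Real.tanh (β / 2) :=
  stmt6_general β f hf
end

section
/- For ξ ∈ (0, π/2), with f(x) = log(cos²ξ / cos²(ξ(x-1))), one has (1/2)∫₀¹ (f'(x))² dx = 2ξ·(tan ξ - ξ). -/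
open Real Set

/-!
Off the zeros of `cos`, `f' x = 2 ξ tan (ξ (x - 1))`, and `tan² t` has antiderivative `tan t - t`.
The substitution `t = ξ (x - 1)` therefore gives
`(1/2) ∫₀¹ f'² = 2 ξ ∫_{-ξ}^0 tan² t dt = 2 ξ (tan ξ - ξ)`.
-/

lemma Real.hasDerivAt_tan_sub_id {x : ℝ} (hx : cos x ≠ 0) :
    HasDerivAt (fun y => tan y - y) (tan x ^ 2) x := by
  refine ((hasDerivAt_tan hx).sub (hasDerivAt_id x)).congr_deriv ?_
  rw [tan_eq_sin_div_cos, div_pow, sin_sq]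
  field_simp

lemma Real.integral_tan_sq {a b : ℝ} (h : ∀ x ∈ uIcc a b, cos x ≠ 0) :
    ∫ x in a..b, tan x ^ 2 = tan b - tan a - (b - a) := by
  have hint : IntervalIntegrable (fun x => tan x ^ 2) MeasureTheory.volume a b :=
    ((continuousOn_tan.mono h).pow 2).intervalIntegrable
  rw [intervalIntegral.integral_eq_sub_of_hasDerivAt
    (fun x hx => hasDerivAt_tan_sub_id (h x hx)) hint]
  ring

lemma HasDerivAt.log_div_cos_sq {u : ℝ → ℝ} {u' x C : ℝ} (hu : HasDerivAt u u' x)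
    (hC : C ≠ 0) (hx : Real.cos (u x) ≠ 0) :
    HasDerivAt (fun y => Real.log (C / Real.cos (u y) ^ 2)) (2 * u' * Real.tan (u x)) x := by
  have hg := (hasDerivAt_const x C).fun_div (hu.cos.fun_pow 2) (by positivity)
  refine (hg.log (by positivity)).congr_deriv ?_
  rw [tan_eq_sin_div_cos]
  field_simp
  ring

/-- Rate function value in the Black–Scholes model, case `K ≤ S₀`:
`(1/2)∫₀¹ (f'(x))² dx = 2ξ(tan ξ - ξ)` for
`f(x) = log(cos²ξ / cos²(ξ(x-1)))`, `ξ ∈ (0, π/2)`. -/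
theorem stmt7 (ξ : ℝ) (hξ : ξ ∈ Ioo 0 (π / 2))
    (f : ℝ → ℝ)
    (hf : ∀ x, f x = Real.log (Real.cos ξ ^ 2 / Real.cos (ξ * (x - 1)) ^ 2)) :
    (1/2) * ∫ x in (0:ℝ)..1, (deriv f x) ^ 2 = 2 * ξ * (Real.tan ξ - ξ) := by
  obtain ⟨hξ0, hξπ⟩ := hξ
  have hcos : ∀ t, -ξ ≤ t → t ≤ ξ → cos t ≠ 0 := fun t h₁ h₂ =>
    (cos_pos_of_mem_Ioo ⟨by linarith, by linarith⟩).ne'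
  have hderiv_sq : ∀ x ∈ uIcc (0:ℝ) 1, deriv f x ^ 2 = (2 * ξ) ^ 2 * tan (ξ * x - ξ) ^ 2 := by
    intro x hx
    rw [uIcc_of_le zero_le_one] at hx
    have hu : HasDerivAt (fun y => ξ * (y - 1)) ξ x := by
      simpa using ((hasDerivAt_id x).sub_const 1).const_mul ξ
    have hcos_x : cos (ξ * (x - 1)) ≠ 0 := hcos _ (by nlinarith [hx.1]) (by nlinarith [hx.2])
    have hcosξ : cos ξ ^ 2 ≠ 0 := pow_ne_zero 2 (hcos ξ (by linarith) le_rfl)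
    rw [funext hf, (hu.log_div_cos_sq hcosξ hcos_x).deriv, mul_sub_one]
    ring
  have htan : ∀ t ∈ uIcc (-ξ) 0, cos t ≠ 0 := by
    intro t ht
    rw [uIcc_of_le (by linarith)] at ht
    exact hcos t ht.1 (by linarith [ht.2])
  rw [intervalIntegral.integral_congr hderiv_sq, intervalIntegral.integral_const_mul,
    intervalIntegral.integral_comp_mul_sub (fun t => tan t ^ 2) hξ0.ne', mul_zero, mul_one,
    zero_sub, sub_self, integral_tan_sq htan, tan_neg, tan_zero, smul_eq_mul]
  field_simp
  ring
end
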